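/- Let d, p ≥ 1 and let d_tile ≥ 1 divide d, writing T = d/d_tile, and for x ∈ ℝ^d write x^{(1)}, …, x^{(T)} ∈ ℝ^{d_tile} for its consecutive tiles. Define the tiled symmetric power tspow_p : ℝ^d → ℝ^{C(T+p−1,p) · d_tile^p} as the concatenation, over non-decreasing tile multi-indices τ = (τ_1 ≤ ⋯ ≤ τ_p) ∈ NDMI^p_T, of the blocks √(p! / ∏_{k=1}^T hist_k(τ)!) · flatten(x^{(τ_1)} ⊗ ⋯ ⊗ x^{(τ_p)}). Then for all q, k ∈ ℝ^d, ⟨tspow_p(q), tspow_p(k)⟩ = (⟨q, k⟩)^p. -/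

import Mathlib

open scoped Classical

/-- hist_k(τ): the number of positions j with τ_j = k. -/
def hist {p T : ℕ} (τ : Fin p → Fin T) (k : Fin T) : ℕ :=
  (Finset.univ.filter (fun j => τ j = k)).card

/-- The τ-th consecutive tile x^{(τ)} ∈ ℝ^{d_tile} of a vector x ∈ ℝ^{T·d_tile}:
its r-th entry is x_{τ·d_tile + r}. -/
def tile {dt T : ℕ} (x : Fin (T * dt) → ℝ) (τ : Fin T) (r : Fin dt) : ℝ :=
  x ⟨τ.1 * dt + r.1, by
    have h1 : τ.1 + 1 ≤ T := τ.isLt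
    have h2 : r.1 < dt := r.isLt
    calc τ.1 * dt + r.1 < τ.1 * dt + dt := by omega
      _ = (τ.1 + 1) * dt := by ring
      _ ≤ T * dt := Nat.mul_le_mul_right dt h1⟩


/-! The block of `τ` contributes `p! / ∏ hist_k(τ)!` times `∏ⱼ ⟨q^{(τⱼ)}, k^{(τⱼ)}⟩`, because inner
products of flattened tensor products factorise. That coefficient is the number of tuples whose
sorting is `τ`, and sorted tuples are multisets of size `p`, so the sum over `τ` is the multinomial
expansion of `(∑ₛ ⟨q^{(s)}, k^{(s)}⟩)^p = ⟨q, k⟩^p`. -/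

open Finset
open scoped Nat

theorem Fintype.sum_pi_prod_mul_prod {ι κ R : Type*} [Fintype ι] [DecidableEq ι] [Fintype κ]
    [CommSemiring R] (f g : ι → κ → R) :
    ∑ i : ι → κ, (∏ j, f j (i j)) * ∏ j, g j (i j) = ∏ j, ∑ r, f j r * g j r := by
  simp only [← prod_mul_distrib]
  exact (Fintype.prod_sum fun j r => f j r * g j r).symm

theorem Multiset.countPerms_mul_prod_factorial_count {α : Type*} [Fintype α] [DecidableEq α]
    (m : Multiset α) : m.countPerms * ∏ a, (m.count a)! = (card m)! := by
  rw [countPerms, Finsupp.multinomial_eq_of_support_subset (subset_univ _), mul_comm]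
  simpa using Nat.multinomial_spec univ m.toFinsupp

def monotoneEquivSym (α : Type*) [LinearOrder α] (p : ℕ) :
    {f : Fin p → α // Monotone f} ≃ Sym α p where
  toFun f := ⟨List.ofFn f.1, by simp⟩
  invFun m := ⟨fun j => (m.1.sort).get (j.cast (by simp)),
    fun _ _ hab => (Multiset.pairwise_sort m.1 _).sortedLE.monotone_get hab⟩
  left_inv f := by
    apply Subtype.ext
    apply List.ofFn_injective
    rw [← List.ofFn_congr (by simp), List.ofFn_get, Multiset.coe_sort]
    exact List.mergeSort_eq_self _ f.2.sortedLE_ofFn.pairwise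
  right_inv m := by
    apply Subtype.ext
    dsimp only
    rw [← List.ofFn_congr (by simp), List.ofFn_get, Multiset.sort_eq]

theorem monotoneEquivSym_apply_val {α : Type*} [LinearOrder α] {p : ℕ}
    (f : {f : Fin p → α // Monotone f}) :
    (monotoneEquivSym α p f).1 = List.ofFn f.1 :=
  rfl

theorem hist_eq_count_ofFn {p T : ℕ} (τ : Fin p → Fin T) (s : Fin T) :
    hist τ s = (List.ofFn τ : Multiset (Fin T)).count s := by
  rw [← Fin.univ_val_map, Multiset.count_map, hist, Finset.card, Finset.filter_val]
  exact congrArg _ (Multiset.filter_congr fun _ _ => eq_comm)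

theorem factorial_div_prod_factorial_hist {p T : ℕ} (τ : Fin p → Fin T) :
    (p ! : ℝ) / ∏ s, ((hist τ s)! : ℝ) = (List.ofFn τ : Multiset (Fin T)).countPerms := by
  have key := (List.ofFn τ : Multiset (Fin T)).countPerms_mul_prod_factorial_count
  simp only [Multiset.coe_card, List.length_ofFn, ← hist_eq_count_ofFn] at key
  rw [div_eq_iff (by positivity), ← key]
  push_cast
  rfl

theorem tile_apply {dt T : ℕ} (x : Fin (T * dt) → ℝ) (s : Fin T) (r : Fin dt) :
    tile x s r = x (finProdFinEquiv (s, r)) := by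
  simp only [tile]
  congr 1
  ext
  simp [finProdFinEquiv, add_comm, mul_comm]

theorem sum_tile_mul_tile {dt T : ℕ} (q k : Fin (T * dt) → ℝ) :
    ∑ s, ∑ r, tile q s r * tile k s r = ∑ a, q a * k a := by
  simp only [tile_apply, ← Fintype.sum_prod_type']
  exact finProdFinEquiv.sum_comp fun a => q a * k a

theorem tspow_inner_product_general (p dt T : ℕ) (q k : Fin (T * dt) → ℝ) :
    ∑ τ : {f : Fin p → Fin T // Monotone f}, ∑ i : Fin p → Fin dt,
        (Real.sqrt ((p.factorial : ℝ) / ∏ s, ((hist τ.1 s).factorial : ℝ))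
            * ∏ j, tile q (τ.1 j) (i j))
          * (Real.sqrt ((p.factorial : ℝ) / ∏ s, ((hist τ.1 s).factorial : ℝ))
            * ∏ j, tile k (τ.1 j) (i j))
      = (∑ a, q a * k a) ^ p := by
  rw [← sum_tile_mul_tile, sum_pow, sym_univ, ← (monotoneEquivSym (Fin T) p).sum_comp]
  refine sum_congr rfl fun τ _ => ?_
  have hweight : 0 ≤ (p ! : ℝ) / ∏ s, ((hist τ.1 s)! : ℝ) := by positivity
  simp only [mul_mul_mul_comm, Real.mul_self_sqrt hweight]
  rw [← mul_sum, Fintype.sum_pi_prod_mul_prod, factorial_div_prod_factorial_hist,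
    monotoneEquivSym_apply_val, Multiset.map_coe, Multiset.prod_coe, List.map_ofFn,
    List.prod_ofFn]
  rfl

/-- Let d = T · d_tile with d_tile ≥ 1 (so d_tile divides d and
T = d / d_tile), and p ≥ 1. The tiled symmetric power tspow_p concatenates,
over non-decreasing tile multi-indices τ ∈ NDMI^p_T, the blocks
√(p! / ∏_k hist_k(τ)!) · flatten(x^{(τ_1)} ⊗ ⋯ ⊗ x^{(τ_p)}).  Then for all
q, k ∈ ℝ^d, ⟨tspow_p(q), tspow_p(k)⟩ = (⟨q, k⟩)^p. -/
theorem tspow_inner_product (p dt T : ℕ) (hp : 1 ≤ p) (hdt : 1 ≤ dt)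
    (hd : 1 ≤ T * dt) (q k : Fin (T * dt) → ℝ) :
    ∑ τ : {f : Fin p → Fin T // Monotone f}, ∑ i : Fin p → Fin dt,
        (Real.sqrt ((p.factorial : ℝ) / ∏ s, ((hist τ.1 s).factorial : ℝ))
            * ∏ j, tile q (τ.1 j) (i j))
          * (Real.sqrt ((p.factorial : ℝ) / ∏ s, ((hist τ.1 s).factorial : ℝ))
            * ∏ j, tile k (τ.1 j) (i j))
      = (∑ a, q a * k a) ^ p :=
  tspow_inner_product_general p dt T q k
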